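/- arXiv:1701.07099 — 5 statements merged into one kernel-verified Lean document; each statement's English description precedes it below -/
import Mathlib

section
/- Let p₁ and p₂ be probability vectors on {1,…,M} with full support, let l ∈ [0, log₂ M], and let S be the set of M×M row-stochastic matrices W satisfying Σ_{j=1}^{M} max_i W_{ij} ≤ 2^l. Suppose W* ∈ S has an all-zero column j₀ (W*_{i j₀} = 0 for all i), and let W̄ be the matrix obtained from W* by interchanging column j₀ with some other column j₁. Then for every λ ∈ [0,1], the matrix λW* + (1−λ)W̄ lies in S and satisfies D(p₁(λW* + (1−λ)W̄) ‖ p₂(λW* + (1−λ)W̄)) = D(p₁W* ‖ p₂W*). In particular, if W* is optimal for maximizing D(p₁W ‖ p₂W) over S and has a zero column, then infinitely many matrices in S are optimal. -/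
/-- The maximum of column `j` of the matrix `W` (entries `W i j`). -/
noncomputable def colMax {M : ℕ} (hM : 1 ≤ M) (W : Fin M → Fin M → ℝ) (j : Fin M) : ℝ :=
  Finset.univ.sup' (Finset.univ_nonempty_iff.mpr ⟨⟨0, hM⟩⟩) (fun i => W i j)

/-- `W` is a row-stochastic `M × M` matrix whose maximal leakage is at most `l` bits. -/
noncomputable def Feasible {M : ℕ} (hM : 1 ≤ M) (l : ℝ) (W : Fin M → Fin M → ℝ) : Prop :=
  (∀ i j, 0 ≤ W i j) ∧ (∀ i, ∑ j, W i j = 1) ∧ ∑ j, colMax hM W j ≤ (2 : ℝ) ^ l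

/-- Output distribution `pW` of the mechanism `W` applied to input distribution `p`. -/
def outDist {M : ℕ} (p : Fin M → ℝ) (W : Fin M → Fin M → ℝ) (j : Fin M) : ℝ :=
  ∑ i, p i * W i j

/-- Relative entropy `D(q ‖ r) = Σ_j q_j log₂ (q_j / r_j)` (in bits). -/
noncomputable def klDiv2 {M : ℕ} (q r : Fin M → ℝ) : ℝ :=
  ∑ j, q j * Real.logb 2 (q j / r j)

/-!
Since column `j₀` of `W*` vanishes, `λ W* + (1 - λ) W̄` is `W*` with column `j₁` split into the
two columns `λ w` (at `j₁`) and `(1 - λ) w` (at `j₀`), where `w` is column `j₁` of `W*`. Row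
sums are unchanged, and both the column maximum and the summand `(p₁ ⬝ w) log₂ (p₁ ⬝ w / p₂ ⬝ w)`
of `D(p₁ W ‖ p₂ W)` are positively homogeneous in the column `w`, so splitting a column changes
neither the leakage `Σ_j max_i W_ij` nor the divergence. Splitting a column `j₂` in which `W*`
has a positive entry gives a different matrix for every `λ`, hence infinitely many optimal ones.
-/

open Finset

def PosHomogeneous {ι : Type*} (F : (ι → ℝ) → ℝ) : Prop :=
  ∀ a : ℝ, 0 ≤ a → ∀ v, F (a • v) = a * F v

namespace PosHomogeneous

variable {ι : Type*} {F : (ι → ℝ) → ℝ}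

theorem map_zero (hF : PosHomogeneous F) : F 0 = 0 := by
  simpa using hF 0 le_rfl 0

theorem map_convexComb_of_zero_or_eq (hF : PosHomogeneous F) {u v : ι → ℝ}
    (huv : u = 0 ∨ v = 0 ∨ u = v) {t : ℝ} (ht₀ : 0 ≤ t) (ht₁ : t ≤ 1) :
    F (t • u + (1 - t) • v) = t * F u + (1 - t) * F v := by
  rcases huv with rfl | rfl | rfl
  · simp [hF _ (sub_nonneg.mpr ht₁), hF.map_zero]
  · simp [hF _ ht₀, hF.map_zero]
  · rw [← add_smul, add_sub_cancel, one_smul]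
    ring

end PosHomogeneous

section ColumnSplit

variable {ι κ : Type*} [Fintype κ] [DecidableEq κ]

def colSwapMix (W : ι → κ → ℝ) (j₀ j₁ : κ) (t : ℝ) : ι → κ → ℝ :=
  fun i j => t * W i j + (1 - t) * W i (Equiv.swap j₀ j₁ j)

theorem PosHomogeneous.sum_colSwapMix {F : (ι → ℝ) → ℝ} (hF : PosHomogeneous F)
    {W : ι → κ → ℝ} {j₀ : κ} (hzero : ∀ i, W i j₀ = 0) (j₁ : κ) {t : ℝ}
    (ht₀ : 0 ≤ t) (ht₁ : t ≤ 1) :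
    ∑ j, F (fun i => colSwapMix W j₀ j₁ t i j) = ∑ j, F (fun i => W i j) := by
  set σ := Equiv.swap j₀ j₁
  have hcol : ∀ j, F (fun i => colSwapMix W j₀ j₁ t i j)
      = t * F (fun i => W i j) + (1 - t) * F (fun i => W i (σ j)) := by
    intro j
    refine hF.map_convexComb_of_zero_or_eq ?_ ht₀ ht₁
    by_cases h₀ : j = j₀
    · exact Or.inl (funext fun i => by simp [h₀, hzero])
    by_cases h₁ : j = j₁
    · exact Or.inr (Or.inl (funext fun i => by simp [h₁, hzero]))
    · exact Or.inr (Or.inr (by rw [Equiv.swap_apply_of_ne_of_ne h₀ h₁]))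
  simp only [hcol, sum_add_distrib, ← mul_sum, Equiv.sum_comp σ (fun j => F fun i => W i j)]
  ring

theorem sum_colSwapMix_row [Fintype ι] (W : ι → κ → ℝ) (j₀ j₁ : κ) (t : ℝ) (i : ι) :
    ∑ j, colSwapMix W j₀ j₁ t i j = ∑ j, W i j := by
  simp only [colSwapMix, sum_add_distrib, ← mul_sum,
    Equiv.sum_comp (Equiv.swap j₀ j₁) (W i)]
  ring

theorem exists_injective_colSwapMix {W : ι → κ → ℝ} {j₀ : κ} (hzero : ∀ i, W i j₀ = 0) {i₀ : ι}
    (hrow : 0 < ∑ j, W i₀ j) : ∃ j₁, Function.Injective (colSwapMix W j₀ j₁) := by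
  obtain ⟨j₁, -, hpos⟩ : ∃ j ∈ univ, (0 : ℝ) < W i₀ j := exists_lt_of_sum_lt (by simpa using hrow)
  refine ⟨j₁, fun s t hst => ?_⟩
  have hentry := congrFun (congrFun hst i₀) j₁
  simp only [colSwapMix, Equiv.swap_apply_right, hzero, mul_zero, add_zero] at hentry
  exact mul_right_cancel₀ hpos.ne' hentry

end ColumnSplit

theorem posHomogeneous_sup' {ι : Type*} {s : Finset ι} (hs : s.Nonempty) :
    PosHomogeneous (fun v : ι → ℝ => s.sup' hs v) := fun a ha v => by
  simpa using (mul₀_sup' ha v s hs).symm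

theorem posHomogeneous_dotProduct_mul_logb {ι : Type*} [Fintype ι] (p q : ι → ℝ) :
    PosHomogeneous (fun v => (p ⬝ᵥ v) * Real.logb 2 ((p ⬝ᵥ v) / (q ⬝ᵥ v))) := by
  intro a ha v
  simp only [dotProduct_smul, smul_eq_mul]
  rcases ha.eq_or_lt with rfl | ha
  · simp
  · rw [mul_div_mul_left _ _ ha.ne']
    ring

section Mechanism

variable {M : ℕ} {l : ℝ} {W : Fin M → Fin M → ℝ} {j₀ : Fin M}

theorem feasible_colSwapMix (hM : 1 ≤ M) (hW : Feasible hM l W) (hzero : ∀ i, W i j₀ = 0)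
    (j₁ : Fin M) {t : ℝ} (ht₀ : 0 ≤ t) (ht₁ : t ≤ 1) : Feasible hM l (colSwapMix W j₀ j₁ t) := by
  obtain ⟨hnonneg, hrow, hleak⟩ := hW
  refine ⟨fun i j => ?_, fun i => (sum_colSwapMix_row W j₀ j₁ t i).trans (hrow i), ?_⟩
  · exact add_nonneg (mul_nonneg ht₀ (hnonneg i j))
      (mul_nonneg (sub_nonneg.mpr ht₁) (hnonneg i _))
  · unfold colMax
    rwa [(posHomogeneous_sup' _).sum_colSwapMix hzero j₁ ht₀ ht₁]

theorem klDiv2_outDist_colSwapMix (p₁ p₂ : Fin M → ℝ) (hzero : ∀ i, W i j₀ = 0) (j₁ : Fin M)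
    {t : ℝ} (ht₀ : 0 ≤ t) (ht₁ : t ≤ 1) :
    klDiv2 (outDist p₁ (colSwapMix W j₀ j₁ t)) (outDist p₂ (colSwapMix W j₀ j₁ t)) =
      klDiv2 (outDist p₁ W) (outDist p₂ W) :=
  (posHomogeneous_dotProduct_mul_logb p₁ p₂).sum_colSwapMix hzero j₁ ht₀ ht₁

end Mechanism

theorem stmt4_general {M : ℕ} (hM : 1 ≤ M) (p₁ p₂ : Fin M → ℝ)
    (l : ℝ)
    (Wstar : Fin M → Fin M → ℝ) (hWstar : Feasible hM l Wstar)
    (j₀ j₁ : Fin M) (hzero : ∀ i, Wstar i j₀ = 0)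
    (Wbar : Fin M → Fin M → ℝ)
    (hWbar : ∀ i j, Wbar i j = Wstar i (Equiv.swap j₀ j₁ j)) :
    (∀ lam ∈ Set.Icc (0 : ℝ) 1,
      Feasible hM l (fun i j => lam * Wstar i j + (1 - lam) * Wbar i j) ∧
      klDiv2 (outDist p₁ (fun i j => lam * Wstar i j + (1 - lam) * Wbar i j))
             (outDist p₂ (fun i j => lam * Wstar i j + (1 - lam) * Wbar i j)) =
        klDiv2 (outDist p₁ Wstar) (outDist p₂ Wstar)) ∧
    ((∀ W, Feasible hM l W →
        klDiv2 (outDist p₁ W) (outDist p₂ W) ≤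
          klDiv2 (outDist p₁ Wstar) (outDist p₂ Wstar)) →
      {W : Fin M → Fin M → ℝ | Feasible hM l W ∧
        klDiv2 (outDist p₁ W) (outDist p₂ W) =
          klDiv2 (outDist p₁ Wstar) (outDist p₂ Wstar)}.Infinite) := by
  refine ⟨fun lam ⟨hlam₀, hlam₁⟩ => ?_, fun _ => ?_⟩
  · have hmix : (fun i j => lam * Wstar i j + (1 - lam) * Wbar i j)
        = colSwapMix Wstar j₀ j₁ lam := by
      funext i j
      rw [hWbar, colSwapMix]
    rw [hmix]
    exact ⟨feasible_colSwapMix hM hWstar hzero j₁ hlam₀ hlam₁,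
      klDiv2_outDist_colSwapMix p₁ p₂ hzero j₁ hlam₀ hlam₁⟩
  · obtain ⟨j₂, hinj⟩ := exists_injective_colSwapMix hzero
      (i₀ := ⟨0, hM⟩) (by rw [hWstar.2.1]; exact one_pos)
    refine ((Set.Icc_infinite zero_lt_one).image hinj.injOn).mono ?_
    rintro _ ⟨t, ⟨ht₀, ht₁⟩, rfl⟩
    exact ⟨feasible_colSwapMix hM hWstar hzero j₂ ht₀ ht₁,
      klDiv2_outDist_colSwapMix p₁ p₂ hzero j₂ ht₀ ht₁⟩

/-- If a feasible `W*` has an all-zero column `j₀` and `W̄` is obtained from `W*` by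
interchanging columns `j₀` and `j₁`, then every convex combination `λ W* + (1-λ) W̄` is
feasible and has the same utility `D(p₁ W ‖ p₂ W)` as `W*`.  In particular, if `W*` is
optimal then infinitely many feasible matrices are optimal. -/
theorem stmt4 {M : ℕ} (hM : 1 ≤ M) (p₁ p₂ : Fin M → ℝ)
    (h₁ : ∀ i, 0 < p₁ i) (h₂ : ∀ i, 0 < p₂ i)
    (hs₁ : ∑ i, p₁ i = 1) (hs₂ : ∑ i, p₂ i = 1)
    (l : ℝ) (hl0 : 0 ≤ l) (hl1 : l ≤ Real.logb 2 M)
    (Wstar : Fin M → Fin M → ℝ) (hWstar : Feasible hM l Wstar)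
    (j₀ j₁ : Fin M) (hj : j₁ ≠ j₀) (hzero : ∀ i, Wstar i j₀ = 0)
    (Wbar : Fin M → Fin M → ℝ)
    (hWbar : ∀ i j, Wbar i j = Wstar i (Equiv.swap j₀ j₁ j)) :
    (∀ lam ∈ Set.Icc (0 : ℝ) 1,
      Feasible hM l (fun i j => lam * Wstar i j + (1 - lam) * Wbar i j) ∧
      klDiv2 (outDist p₁ (fun i j => lam * Wstar i j + (1 - lam) * Wbar i j))
             (outDist p₂ (fun i j => lam * Wstar i j + (1 - lam) * Wbar i j)) =
        klDiv2 (outDist p₁ Wstar) (outDist p₂ Wstar)) ∧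
    ((∀ W, Feasible hM l W →
        klDiv2 (outDist p₁ W) (outDist p₂ W) ≤
          klDiv2 (outDist p₁ Wstar) (outDist p₂ Wstar)) →
      {W : Fin M → Fin M → ℝ | Feasible hM l W ∧
        klDiv2 (outDist p₁ W) (outDist p₂ W) =
          klDiv2 (outDist p₁ Wstar) (outDist p₂ Wstar)}.Infinite) :=
  stmt4_general hM p₁ p₂ l Wstar hWstar j₀ j₁ hzero Wbar hWbar
end

section
/- Let p₁, p₂ ∈ (0,1) with p₁ ≠ p₂, let l ∈ [0,1], and let S be the set of 2×2 row-stochastic matrices W with nonnegative entries satisfying Σ_{j=1}^{2} max_i W_{ij} ≤ 2^l. Then the maximum of D(π₁W ‖ π₂W) over W ∈ S, where π_k = (1−p_k, p_k), equals max{f₁(p₁,p₂,l), f₂(p₁,p₂,l)}, where f₁(p₁,p₂,l) = (p₁−1)(2^l−1)·log₂[ (1−p₂)((2−2^l)+p₁(2^l−1)) / ((1−p₁)((2−2^l)+p₂(2^l−1))) ] + log₂[ ((2−2^l)+p₁(2^l−1)) / ((2−2^l)+p₂(2^l−1)) ] and f₂(p₁,p₂,l) = p₁(2^l−1)·log₂[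 p₁(1+p₂(1−2^l)) / (p₂(1+p₁(1−2^l))) ] + log₂[ (1+p₁(1−2^l)) / (1+p₂(1−2^l)) ]. Moreover this maximum is attained by W₁ = [[2−2^l, 2^l−1],[1, 0]] when f₁ ≥ f₂ and by W₂ = [[0, 1],[2^l−1, 2−2^l]] when f₂ ≥ f₁. -/
/-- The utility `f₁` of the mechanism `W₁ = [[2-2^l, 2^l-1], [1, 0]]`. -/
noncomputable def f₁ (p₁ p₂ l : ℝ) : ℝ :=
  (p₁ - 1) * ((2 : ℝ) ^ l - 1) *
      Real.logb 2 ((1 - p₂) * ((2 - (2 : ℝ) ^ l) + p₁ * ((2 : ℝ) ^ l - 1)) /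
        ((1 - p₁) * ((2 - (2 : ℝ) ^ l) + p₂ * ((2 : ℝ) ^ l - 1)))) +
    Real.logb 2 (((2 - (2 : ℝ) ^ l) + p₁ * ((2 : ℝ) ^ l - 1)) /
        ((2 - (2 : ℝ) ^ l) + p₂ * ((2 : ℝ) ^ l - 1)))

/-- The utility `f₂` of the mechanism `W₂ = [[0, 1], [2^l-1, 2-2^l]]`. -/
noncomputable def f₂ (p₁ p₂ l : ℝ) : ℝ :=
  p₁ * ((2 : ℝ) ^ l - 1) *
      Real.logb 2 (p₁ * (1 + p₂ * (1 - (2 : ℝ) ^ l)) /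
        (p₂ * (1 + p₁ * (1 - (2 : ℝ) ^ l)))) +
    Real.logb 2 ((1 + p₁ * (1 - (2 : ℝ) ^ l)) / (1 + p₂ * (1 - (2 : ℝ) ^ l)))

open Real Set

lemma convexOn_mul_log_div :
    ConvexOn ℝ (Ici 0 ×ˢ Ioi 0) fun x : ℝ × ℝ => x.1 * log (x.1 / x.2) := by
  refine ⟨(convex_Ici 0).prod (convex_Ioi 0), ?_⟩
  rintro ⟨x₁, y₁⟩ ⟨hx₁, hy₁⟩ ⟨x₂, y₂⟩ ⟨hx₂, hy₂⟩ a b ha hb hab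
  simp only [mem_Ici, mem_Ioi] at hx₁ hy₁ hx₂ hy₂
  simp only [Prod.smul_mk, Prod.mk_add_mk, smul_eq_mul]
  set y := a * y₁ + b * y₂
  have hy : 0 < y := by
    nlinarith [mul_le_mul_of_nonneg_left (min_le_left y₁ y₂) ha,
      mul_le_mul_of_nonneg_left (min_le_right y₁ y₂) hb, lt_min hy₁ hy₂]
  -- `x log (x / y) = y φ (x / y)` with `φ u = u log u`; apply convexity of `φ`, weights `a yᵢ / y`
  have h := convexOn_mul_log.2 (mem_Ici.2 (div_nonneg hx₁ hy₁.le))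
    (mem_Ici.2 (div_nonneg hx₂ hy₂.le)) (div_nonneg (mul_nonneg ha hy₁.le) hy.le)
    (div_nonneg (mul_nonneg hb hy₂.le) hy.le) (by rw [← add_div, div_self hy.ne'])
  have e : a * y₁ / y * (x₁ / y₁) + b * y₂ / y * (x₂ / y₂) = (a * x₁ + b * x₂) / y := by
    field_simp
  simp only [smul_eq_mul, e] at h
  calc (a * x₁ + b * x₂) * log ((a * x₁ + b * x₂) / y)
      = y * ((a * x₁ + b * x₂) / y * log ((a * x₁ + b * x₂) / y)) := by field_simp
    _ ≤ y * (a * y₁ / y * (x₁ / y₁ * log (x₁ / y₁)) + b * y₂ / y * (x₂ / y₂ * log (x₂ / y₂))) := by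
        gcongr
    _ = a * (x₁ * log (x₁ / y₁)) + b * (x₂ * log (x₂ / y₂)) := by field_simp

lemma mul_log_mul_div_mul (c x y : ℝ) : c * x * log (c * x / (c * y)) = c * (x * log (x / y)) := by
  rcases eq_or_ne c 0 with rfl | hc
  · simp
  · rw [mul_div_mul_left _ _ hc, mul_assoc]

/-- Binary relative entropy `D((q, 1 - q) ‖ (r, 1 - r))`, in nats. -/
noncomputable def binKL (q r : ℝ) : ℝ :=
  q * log (q / r) + (1 - q) * log ((1 - q) / (1 - r))

lemma binKL_one_sub (q r : ℝ) : binKL (1 - q) (1 - r) = binKL q r := by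
  simp only [binKL, sub_sub_cancel]
  ring

lemma binKL_self (q : ℝ) : binKL q q = 0 := by
  simp [binKL]

lemma convexOn_binKL : ConvexOn ℝ (Icc 0 1 ×ˢ Ioo 0 1) fun x : ℝ × ℝ => binKL x.1 x.2 := by
  refine ⟨(convex_Icc 0 1).prod (convex_Ioo 0 1), ?_⟩
  rintro ⟨q₁, r₁⟩ ⟨⟨hq₁0, hq₁1⟩, hr₁0, hr₁1⟩ ⟨q₂, r₂⟩ ⟨⟨hq₂0, hq₂1⟩, hr₂0, hr₂1⟩ a b ha hb hab
  have h := convexOn_mul_log_div.2 (x := (q₁, r₁)) (y := (q₂, r₂))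
    ⟨mem_Ici.2 hq₁0, mem_Ioi.2 hr₁0⟩ ⟨mem_Ici.2 hq₂0, mem_Ioi.2 hr₂0⟩ ha hb hab
  have h' := convexOn_mul_log_div.2 (x := (1 - q₁, 1 - r₁)) (y := (1 - q₂, 1 - r₂))
    ⟨mem_Ici.2 (sub_nonneg.2 hq₁1), mem_Ioi.2 (sub_pos.2 hr₁1)⟩
    ⟨mem_Ici.2 (sub_nonneg.2 hq₂1), mem_Ioi.2 (sub_pos.2 hr₂1)⟩ ha hb hab
  have e : ∀ u v : ℝ, a * (1 - u) + b * (1 - v) = 1 - (a * u + b * v) := by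
    intro u v; linear_combination hab
  simp only [Prod.smul_mk, Prod.mk_add_mk, smul_eq_mul, e] at h h' ⊢
  simp only [binKL]
  linarith

lemma binKL_nonneg {q r : ℝ} (hq : q ∈ Icc 0 1) (hr : r ∈ Ioo 0 1) : 0 ≤ binKL q r := by
  have h := convexOn_mul_log_div.2 (x := (q, r)) (y := (1 - q, 1 - r))
    ⟨mem_Ici.2 hq.1, mem_Ioi.2 hr.1⟩ ⟨mem_Ici.2 (sub_nonneg.2 hq.2), mem_Ioi.2 (sub_pos.2 hr.2)⟩
    (by norm_num : (0 : ℝ) ≤ 1 / 2) (by norm_num : (0 : ℝ) ≤ 1 / 2) (by norm_num)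
  simp only [Prod.smul_mk, Prod.mk_add_mk, smul_eq_mul] at h
  have e : ∀ u : ℝ, 1 / 2 * u + 1 / 2 * (1 - u) = 1 / 2 := by intro u; ring
  rw [e, e, div_self (by norm_num), log_one, mul_zero] at h
  unfold binKL
  linarith

lemma binKL_mul_le {θ q r : ℝ} (hθ : θ ∈ Icc 0 1) (hq : q ∈ Icc 0 1) (hr : r ∈ Ioo 0 1) :
    binKL (θ * q) (θ * r) ≤ θ * binKL q r := by
  -- `(1 - θ q, 1 - θ r) = (1 - θ) • (1, 1) + θ • (1 - q, 1 - r)`, and `(1, 1)` costs nothing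
  have h := convexOn_mul_log_div.2 (x := (1, 1)) (y := (1 - q, 1 - r))
    ⟨mem_Ici.2 zero_le_one, mem_Ioi.2 zero_lt_one⟩
    ⟨mem_Ici.2 (sub_nonneg.2 hq.2), mem_Ioi.2 (sub_pos.2 hr.2)⟩
    (sub_nonneg.2 hθ.2) hθ.1 (sub_add_cancel 1 θ)
  have e : ∀ u : ℝ, (1 - θ) * 1 + θ * (1 - u) = 1 - θ * u := by intro u; ring
  simp only [Prod.smul_mk, Prod.mk_add_mk, smul_eq_mul, e, div_one, log_one, mul_zero,
    zero_add] at h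
  unfold binKL
  linarith [mul_log_mul_div_mul θ q r]

lemma binKL_mul_le_mul {p₁ p₂ s t : ℝ} (hp₁ : p₁ ∈ Ioo 0 1) (hp₂ : p₂ ∈ Ioo 0 1)
    (hs : 0 ≤ s) (hst : s ≤ t) (ht : t ≤ 1) :
    binKL (p₁ * s) (p₂ * s) ≤ binKL (p₁ * t) (p₂ * t) := by
  obtain rfl | ht0 := (hs.trans hst).eq_or_lt
  · rw [le_antisymm hst hs]
  have hθ : s / t ∈ Icc 0 1 := ⟨div_nonneg hs ht0.le, div_le_one_of_le₀ hst ht0.le⟩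
  have e : ∀ p : ℝ, p * s = s / t * (p * t) := by intro p; field_simp
  have hq : p₁ * t ∈ Icc 0 1 := ⟨by nlinarith [hp₁.1], by nlinarith [hp₁.2]⟩
  have hr : p₂ * t ∈ Ioo 0 1 := ⟨by nlinarith [hp₂.1], by nlinarith [hp₂.2]⟩
  rw [e p₁, e p₂]
  exact (binKL_mul_le hθ hq hr).trans (mul_le_of_le_one_left (binKL_nonneg hq hr) hθ.2)

lemma binKL_add_mul_le_max {p₁ p₂ a s t : ℝ} (hp₁ : p₁ ∈ Ioo 0 1) (hp₂ : p₂ ∈ Ioo 0 1)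
    (ha : 0 ≤ a) (hs : 0 ≤ s) (has : a + s ≤ 1) (hst : s ≤ t) (ht : t ≤ 1) :
    binKL (a + p₁ * s) (a + p₂ * s) ≤
      max (binKL ((1 - p₁) * t) ((1 - p₂) * t)) (binKL (p₁ * t) (p₂ * t)) := by
  have hp₁' : 1 - p₁ ∈ Ioo 0 1 := ⟨sub_pos.2 hp₁.2, sub_lt_self 1 hp₁.1⟩
  have hp₂' : 1 - p₂ ∈ Ioo 0 1 := ⟨sub_pos.2 hp₂.2, sub_lt_self 1 hp₂.1⟩
  obtain rfl | hs := hs.eq_or_lt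
  · have h0 := binKL_mul_le_mul hp₁ hp₂ le_rfl hst ht
    simp only [mul_zero, add_zero, binKL_self] at h0 ⊢
    exact le_max_of_le_right h0
  have hmem : ∀ {p p' : ℝ}, p ∈ Ioo 0 1 → p' ∈ Ioo 0 1 →
      (p * s, p' * s) ∈ Icc (0 : ℝ) 1 ×ˢ Ioo (0 : ℝ) 1 ∧
        (1 - p * s, 1 - p' * s) ∈ Icc (0 : ℝ) 1 ×ˢ Ioo (0 : ℝ) 1 := by
    intro p p' hp hp'
    have h : ∀ {p : ℝ}, p ∈ Ioo 0 1 → 0 < p * s ∧ p * s < 1 := fun hp =>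
      ⟨mul_pos hp.1 hs, by nlinarith [hp.1, hp.2]⟩
    obtain ⟨h₁, h₂⟩ := h hp
    obtain ⟨h₃, h₄⟩ := h hp'
    exact ⟨⟨⟨h₁.le, h₂.le⟩, h₃, h₄⟩, ⟨⟨by linarith, by linarith⟩, by linarith, by linarith⟩⟩
  -- `(a + p₁ s, a + p₂ s)` is on the segment from `(1 - (1 - p₁) s, 1 - (1 - p₂) s)` to `(p₁ s, p₂ s)`
  obtain ⟨θ, hθ0, hθ1, hθ⟩ : ∃ θ : ℝ, 0 ≤ θ ∧ θ ≤ 1 ∧ θ * (1 - s) = a := by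
    refine ⟨a / (1 - s), div_nonneg ha (by linarith),
      div_le_one_of_le₀ (by linarith) (by linarith), ?_⟩
    rcases eq_or_ne (1 - s) 0 with h | h
    · rw [h, mul_zero]; linarith
    · exact div_mul_cancel₀ a h
  have e : ∀ p : ℝ, θ * (1 - (1 - p) * s) + (1 - θ) * (p * s) = a + p * s := by
    intro p; linear_combination hθ
  have hseg := convexOn_binKL.le_on_segment' (x := (1 - (1 - p₁) * s, 1 - (1 - p₂) * s))
    (y := (p₁ * s, p₂ * s)) (hmem hp₁' hp₂').2 (hmem hp₁ hp₂).1 hθ0 (sub_nonneg.2 hθ1)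
    (add_sub_cancel θ 1)
  simp only [Prod.smul_mk, Prod.mk_add_mk, smul_eq_mul, e, binKL_one_sub] at hseg
  exact hseg.trans (max_le_max (binKL_mul_le_mul hp₁' hp₂' hs.le hst ht)
      (binKL_mul_le_mul hp₁ hp₂ hs.le hst ht))

lemma binKL_mix_le_max {p₁ p₂ a b t : ℝ} (hp₁ : p₁ ∈ Ioo 0 1) (hp₂ : p₂ ∈ Ioo 0 1)
    (ha : a ∈ Icc 0 1) (hb : b ∈ Icc 0 1) (hab : |a - b| ≤ t) (ht : t ≤ 1) :
    binKL ((1 - p₁) * a + p₁ * b) ((1 - p₂) * a + p₂ * b) ≤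
      max (binKL ((1 - p₁) * t) ((1 - p₂) * t)) (binKL (p₁ * t) (p₂ * t)) := by
  rcases le_total a b with hle | hle
  · have e : ∀ p : ℝ, (1 - p) * a + p * b = a + p * (b - a) := fun p => by ring
    rw [e, e]
    exact binKL_add_mul_le_max hp₁ hp₂ ha.1 (sub_nonneg.2 hle) (by linarith [hb.2])
      (by rwa [abs_sub_comm, abs_of_nonneg (sub_nonneg.2 hle)] at hab) ht
  · -- swapping the two outputs reduces this case to the previous one
    have e : ∀ p : ℝ, (1 - p) * a + p * b = 1 - ((1 - a) + p * (a - b)) := fun p => by ring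
    rw [e, e, binKL_one_sub]
    exact binKL_add_mul_le_max hp₁ hp₂ (sub_nonneg.2 ha.2) (sub_nonneg.2 hle) (by linarith [hb.1])
      (by rwa [abs_of_nonneg (sub_nonneg.2 hle)] at hab) ht

lemma colMax_fin_two (hM : 1 ≤ 2) (W : Fin 2 → Fin 2 → ℝ) (j : Fin 2) :
    colMax hM W j = max (W 0 j) (W 1 j) := by
  simp [colMax, Fin.univ_succ]

lemma feasible_fin_two_iff (hM : 1 ≤ 2) (l : ℝ) (W : Fin 2 → Fin 2 → ℝ) :
    Feasible hM l W ↔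
      (∀ i j, 0 ≤ W i j) ∧ (∀ i, W i 0 + W i 1 = 1) ∧ |W 0 0 - W 1 0| ≤ 2 ^ l - 1 := by
  simp only [Feasible, Fin.sum_univ_two, colMax_fin_two]
  refine and_congr_right fun _ => and_congr_right fun hrow => ?_
  have h : max (W 0 0) (W 1 0) + max (W 0 1) (W 1 1) = 1 + |W 0 0 - W 1 0| := by
    rw [eq_sub_of_add_eq' (hrow 0), eq_sub_of_add_eq' (hrow 1)]
    rcases le_total (W 0 0) (W 1 0) with h | h
    · rw [max_eq_right h, max_eq_left (by linarith), abs_of_nonpos (by linarith)]; ring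
    · rw [max_eq_left h, max_eq_right (by linarith), abs_of_nonneg (by linarith)]; ring
  rw [h]
  constructor <;> intro <;> linarith

lemma klDiv2_outDist_fin_two (p₁ p₂ : ℝ) {W : Fin 2 → Fin 2 → ℝ}
    (hW : ∀ i, W i 0 + W i 1 = 1) :
    klDiv2 (outDist ![1 - p₁, p₁] W) (outDist ![1 - p₂, p₂] W) =
      binKL ((1 - p₁) * W 0 0 + p₁ * W 1 0) ((1 - p₂) * W 0 0 + p₂ * W 1 0) / log 2 := by
  have e : ∀ p : ℝ, (1 - p) * W 0 1 + p * W 1 1 = 1 - ((1 - p) * W 0 0 + p * W 1 0) := by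
    intro p; linear_combination (1 - p) * hW 0 + p * hW 1
  simp only [klDiv2, outDist, binKL, Fin.sum_univ_two, Matrix.cons_val_zero, Matrix.cons_val_one,
    e, logb]
  ring

lemma f₁_eq_f₂_one_sub (p₁ p₂ l : ℝ) : f₁ p₁ p₂ l = f₂ (1 - p₁) (1 - p₂) l := by
  have e : ∀ p : ℝ, 2 - (2 : ℝ) ^ l + p * (2 ^ l - 1) = 1 + (1 - p) * (1 - 2 ^ l) := fun p => by
    ring
  rw [f₁, f₂, e, e, ← inv_div, logb_inv]
  ring

lemma f₂_eq_binKL {p₁ p₂ l : ℝ} (hp₁ : p₁ ∈ Ioo 0 1) (hp₂ : p₂ ∈ Ioo 0 1)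
    (ht : (2 : ℝ) ^ l - 1 ∈ Icc 0 1) :
    f₂ p₁ p₂ l = binKL (p₁ * (2 ^ l - 1)) (p₂ * (2 ^ l - 1)) / log 2 := by
  set t := (2 : ℝ) ^ l - 1
  have e : ∀ p : ℝ, 1 + p * (1 - (2 : ℝ) ^ l) = 1 - p * t := fun p => by ring
  have hu : ∀ {p : ℝ}, p ∈ Ioo 0 1 → 1 - p * t ≠ 0 := fun hp => by
    nlinarith [hp.1, hp.2, ht.1, ht.2]
  have hscale : p₁ * t * log (p₁ * t / (p₂ * t)) = t * (p₁ * log (p₁ / p₂)) := by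
    rw [mul_comm p₁, mul_comm p₂, mul_log_mul_div_mul]
  rw [f₂, e, e, binKL, hscale, logb, logb, mul_div_mul_comm, ← inv_div (1 - p₁ * t),
    log_mul (div_ne_zero hp₁.1.ne' hp₂.1.ne') (inv_ne_zero (div_ne_zero (hu hp₁) (hu hp₂))),
    log_inv]
  ring

/-- Privacy-utility trade-off for binary sources: the maximum of `D(π₁ W ‖ π₂ W)` over all
`2 × 2` row-stochastic matrices `W` with `Σ_j max_i W i j ≤ 2^l` is
`max (f₁ p₁ p₂ l) (f₂ p₁ p₂ l)`, attained by `W₁ = [[2-2^l, 2^l-1], [1, 0]]` when `f₁ ≥ f₂`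
and by `W₂ = [[0, 1], [2^l-1, 2-2^l]]` when `f₂ ≥ f₁`. -/
theorem stmt8 (p₁ p₂ l : ℝ) (hp₁ : p₁ ∈ Set.Ioo (0 : ℝ) 1) (hp₂ : p₂ ∈ Set.Ioo (0 : ℝ) 1)
    (hl : l ∈ Set.Icc (0 : ℝ) 1) :
    (∀ W : Fin 2 → Fin 2 → ℝ, Feasible (by norm_num) l W →
      klDiv2 (outDist ![1 - p₁, p₁] W) (outDist ![1 - p₂, p₂] W) ≤
        max (f₁ p₁ p₂ l) (f₂ p₁ p₂ l)) ∧
    Feasible (by norm_num) l (![![2 - (2 : ℝ) ^ l, (2 : ℝ) ^ l - 1], ![1, 0]]) ∧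
    Feasible (by norm_num) l (![![0, 1], ![(2 : ℝ) ^ l - 1, 2 - (2 : ℝ) ^ l]]) ∧
    klDiv2 (outDist ![1 - p₁, p₁] (![![2 - (2 : ℝ) ^ l, (2 : ℝ) ^ l - 1], ![1, 0]]))
        (outDist ![1 - p₂, p₂] (![![2 - (2 : ℝ) ^ l, (2 : ℝ) ^ l - 1], ![1, 0]])) =
      f₁ p₁ p₂ l ∧
    klDiv2 (outDist ![1 - p₁, p₁] (![![0, 1], ![(2 : ℝ) ^ l - 1, 2 - (2 : ℝ) ^ l]]))
        (outDist ![1 - p₂, p₂] (![![0, 1], ![(2 : ℝ) ^ l - 1, 2 - (2 : ℝ) ^ l]])) =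
      f₂ p₁ p₂ l := by
  have ht : (2 : ℝ) ^ l - 1 ∈ Icc 0 1 := by
    constructor <;> linarith [one_le_rpow one_le_two hl.1, rpow_le_self_of_one_le one_le_two hl.2]
  have hq₁ : 1 - p₁ ∈ Ioo 0 1 := ⟨sub_pos.2 hp₁.2, sub_lt_self 1 hp₁.1⟩
  have hq₂ : 1 - p₂ ∈ Ioo 0 1 := ⟨sub_pos.2 hp₂.2, sub_lt_self 1 hp₂.1⟩
  have hf₁ := f₁_eq_f₂_one_sub p₁ p₂ l ▸ f₂_eq_binKL hq₁ hq₂ ht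
  have hf₂ := f₂_eq_binKL hp₁ hp₂ ht
  refine ⟨fun W hW => ?_, ?_, ?_, ?_, ?_⟩
  · obtain ⟨hnn, hrow, hleak⟩ := (feasible_fin_two_iff _ l W).1 hW
    rw [klDiv2_outDist_fin_two p₁ p₂ hrow, hf₁, hf₂, max_div_div_right (log_pos one_lt_two).le]
    gcongr
    exact binKL_mix_le_max hp₁ hp₂ ⟨hnn 0 0, by linarith [hrow 0, hnn 0 1]⟩
      ⟨hnn 1 0, by linarith [hrow 1, hnn 1 1]⟩ hleak ht.2
  · refine (feasible_fin_two_iff _ l _).2 ⟨fun i j => ?_, fun i => ?_, ?_⟩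
    · fin_cases i <;> fin_cases j <;> simp <;> linarith [ht.1, ht.2]
    · fin_cases i <;> norm_num
    · show |2 - (2 : ℝ) ^ l - 1| ≤ 2 ^ l - 1
      rw [abs_le]; constructor <;> linarith [ht.1]
  · refine (feasible_fin_two_iff _ l _).2 ⟨fun i j => ?_, fun i => ?_, ?_⟩
    · fin_cases i <;> fin_cases j <;> simp <;> linarith [ht.1, ht.2]
    · fin_cases i <;> norm_num
    · show |0 - ((2 : ℝ) ^ l - 1)| ≤ 2 ^ l - 1
      rw [abs_le]; constructor <;> linarith [ht.1]
  · rw [klDiv2_outDist_fin_two p₁ p₂ (fun i => by fin_cases i <;> norm_num), hf₁, ← binKL_one_sub]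
    congr 2 <;> simp <;> ring
  · rw [klDiv2_outDist_fin_two p₁ p₂ (fun i => by fin_cases i <;> norm_num), hf₂]
    simp
end

section
/- Let p₁ and p₂ be probability vectors on {1,…,M}, let W be an M×M matrix with real entries, and let w₀ = (w₀₁,…,w₀_M) be a vector with strictly positive entries. Then Σ_{j=1}^{M} ( Σ_i (p₁ᵢ − p₂ᵢ) W_{ij} )² / w₀ⱼ ≤ (1/4)·‖p₁ − p₂‖₁² · Σ_{j=1}^{M} (max_i W_{ij} − min_i W_{ij})² / w₀ⱼ. -/
/-- The minimum of column `j` of the matrix `W` (entries `W i j`). -/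
noncomputable def colMin {M : ℕ} (hM : 1 ≤ M) (W : Fin M → Fin M → ℝ) (j : Fin M) : ℝ :=
  Finset.univ.inf' (Finset.univ_nonempty_iff.mpr ⟨⟨0, hM⟩⟩) (fun i => W i j)

theorem abs_sum_mul_le_of_sum_eq_zero {ι : Type*} (s : Finset ι) (x f : ι → ℝ) {a b : ℝ}
    (hx : ∑ i ∈ s, x i = 0) (hf : ∀ i ∈ s, f i ∈ Set.Icc a b) :
    |∑ i ∈ s, x i * f i| ≤ (∑ i ∈ s, |x i|) * ((b - a) / 2) := by
  set c := (a + b) / 2 with hc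
  have hshift : ∑ i ∈ s, x i * f i = ∑ i ∈ s, x i * (f i - c) := by
    simp only [mul_sub, Finset.sum_sub_distrib, ← Finset.sum_mul, hx, zero_mul, sub_zero]
  have hdev : ∀ i ∈ s, |f i - c| ≤ (b - a) / 2 := fun i hi => by
    obtain ⟨hai, hib⟩ := hf i hi
    rw [abs_le]
    constructor <;> linarith [hc]
  calc |∑ i ∈ s, x i * f i| = |∑ i ∈ s, x i * (f i - c)| := by rw [hshift]
    _ ≤ ∑ i ∈ s, |x i| * |f i - c| := by
      simp only [← abs_mul]
      exact Finset.abs_sum_le_sum_abs _ _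
    _ ≤ ∑ i ∈ s, |x i| * ((b - a) / 2) :=
      Finset.sum_le_sum fun i hi => mul_le_mul_of_nonneg_left (hdev i hi) (abs_nonneg _)
    _ = (∑ i ∈ s, |x i|) * ((b - a) / 2) := by rw [Finset.sum_mul]

theorem sq_sum_mul_le_of_sum_eq_zero {ι : Type*} (s : Finset ι) (x f : ι → ℝ) {a b : ℝ}
    (hx : ∑ i ∈ s, x i = 0) (hf : ∀ i ∈ s, f i ∈ Set.Icc a b) :
    (∑ i ∈ s, x i * f i) ^ 2 ≤ 1 / 4 * (∑ i ∈ s, |x i|) ^ 2 * (b - a) ^ 2 := by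
  calc (∑ i ∈ s, x i * f i) ^ 2 = |∑ i ∈ s, x i * f i| ^ 2 := (sq_abs _).symm
    _ ≤ ((∑ i ∈ s, |x i|) * ((b - a) / 2)) ^ 2 := by
      gcongr
      exact abs_sum_mul_le_of_sum_eq_zero s x f hx hf
    _ = 1 / 4 * (∑ i ∈ s, |x i|) ^ 2 * (b - a) ^ 2 := by ring

theorem mem_Icc_colMin_colMax {M : ℕ} (hM : 1 ≤ M) (W : Fin M → Fin M → ℝ) (i j : Fin M) :
    W i j ∈ Set.Icc (colMin hM W j) (colMax hM W j) :=
  ⟨Finset.inf'_le (fun i => W i j) (Finset.mem_univ i),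
    Finset.le_sup' (fun i => W i j) (Finset.mem_univ i)⟩

theorem stmt11_general {M : ℕ} (hM : 1 ≤ M) (p₁ p₂ : Fin M → ℝ)
    (hs₁ : ∑ i, p₁ i = 1) (hs₂ : ∑ i, p₂ i = 1)
    (W : Fin M → Fin M → ℝ) (w₀ : Fin M → ℝ) (hw₀ : ∀ j, 0 < w₀ j) :
    ∑ j, (∑ i, (p₁ i - p₂ i) * W i j) ^ 2 / w₀ j ≤
      (1 / 4) * (∑ i, |p₁ i - p₂ i|) ^ 2 *
        ∑ j, (colMax hM W j - colMin hM W j) ^ 2 / w₀ j := by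
  have hsum : ∑ i, (p₁ i - p₂ i) = 0 := by
    rw [Finset.sum_sub_distrib, hs₁, hs₂, sub_self]
  rw [Finset.mul_sum]
  refine Finset.sum_le_sum fun j _ => ?_
  rw [← mul_div_assoc]
  exact div_le_div_of_nonneg_right
    (sq_sum_mul_le_of_sum_eq_zero _ _ _ hsum fun i _ => mem_Icc_colMin_colMax hM W i j)
    (hw₀ j).le

/-- For probability vectors `p₁, p₂`, any `M × M` real matrix `W`, and a positive weight
vector `w₀`, the EIT objective `Σ_j (Σ_i (p₁ i - p₂ i) W i j)² / w₀ j` is at most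
`(1/4) ‖p₁ - p₂‖₁² Σ_j (max_i W i j - min_i W i j)² / w₀ j`. -/
theorem stmt11 {M : ℕ} (hM : 1 ≤ M) (p₁ p₂ : Fin M → ℝ)
    (h₁ : ∀ i, 0 ≤ p₁ i) (h₂ : ∀ i, 0 ≤ p₂ i)
    (hs₁ : ∑ i, p₁ i = 1) (hs₂ : ∑ i, p₂ i = 1)
    (W : Fin M → Fin M → ℝ) (w₀ : Fin M → ℝ) (hw₀ : ∀ j, 0 < w₀ j) :
    ∑ j, (∑ i, (p₁ i - p₂ i) * W i j) ^ 2 / w₀ j ≤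
      (1 / 4) * (∑ i, |p₁ i - p₂ i|) ^ 2 *
        ∑ j, (colMax hM W j - colMin hM W j) ^ 2 / w₀ j :=
  stmt11_general hM p₁ p₂ hs₁ hs₂ W w₀ hw₀
end

section
/- Let p₁ and p₂ be probability vectors on {1,…,M} with full support, and define the M×M matrix Ψ (the derivative of D(p₁W‖p₂W) at W = identity, in natural-log units) by Ψ_{ij} = p₁ᵢ·(ln(p₁ⱼ/p₂ⱼ) + 1) − p₂ᵢ·(p₁ⱼ/p₂ⱼ). Then for every i and j, Ψ_{ii} ≥ Ψ_{ij}; that is, in every row of Ψ the maximal entry lies on the diagonal. In particular Ψ_{ii} = p₁ᵢ·ln(p₁ᵢ/p₂ᵢ). -/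
/-! Row `i` of `Ψ` is `x ↦ a (ln x + 1) - b x` with `a = p₁ i`, `b = p₂ i`, evaluated at
`x = p₁ j / p₂ j`. This concave function is maximised at `x = a / b = p₁ i / p₂ i`, i.e. on the
diagonal, by `ln t ≤ t - 1` applied to `t = b x / a`. -/

namespace Real

theorem mul_log_add_one_sub_mul_at_div {a b : ℝ} (hb : b ≠ 0) :
    a * (log (a / b) + 1) - b * (a / b) = a * log (a / b) := by
  rw [mul_div_cancel₀ a hb]
  ring

theorem mul_log_add_one_sub_mul_le {a b x : ℝ} (ha : 0 < a) (hb : 0 < b) (hx : 0 < x) :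
    a * (log x + 1) - b * x ≤ a * log (a / b) := by
  have hlog : log (b * x / a) ≤ b * x / a - 1 := log_le_sub_one_of_pos (by positivity)
  have hsplit : log (b * x / a) = log x - log (a / b) := by
    rw [← log_div hx.ne' (div_pos ha hb).ne']
    congr 1
    field_simp
  have hscaled : a * (b * x / a - 1) = b * x - a := by
    field_simp
  have hmul := mul_le_mul_of_nonneg_left hlog ha.le
  rw [hsplit, hscaled, mul_sub] at hmul
  linarith

end Real

theorem stmt14_general {M : ℕ} (p₁ p₂ : Fin M → ℝ)
    (h₁ : ∀ i, 0 < p₁ i) (h₂ : ∀ i, 0 < p₂ i)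
    (Ψ : Fin M → Fin M → ℝ)
    (hΨ : ∀ i j, Ψ i j = p₁ i * (Real.log (p₁ j / p₂ j) + 1) - p₂ i * (p₁ j / p₂ j)) :
    (∀ i j, Ψ i j ≤ Ψ i i) ∧ (∀ i, Ψ i i = p₁ i * Real.log (p₁ i / p₂ i)) := by
  have hdiag : ∀ i, Ψ i i = p₁ i * Real.log (p₁ i / p₂ i) := fun i => by
    rw [hΨ, Real.mul_log_add_one_sub_mul_at_div (h₂ i).ne']
  refine ⟨fun i j => ?_, hdiag⟩
  rw [hdiag, hΨ]
  exact Real.mul_log_add_one_sub_mul_le (h₁ i) (h₂ i) (div_pos (h₁ j) (h₂ j))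

/-- For fully supported probability vectors `p₁, p₂`, the derivative matrix
`Ψ i j = p₁ i (ln (p₁ j / p₂ j) + 1) - p₂ i (p₁ j / p₂ j)` of `W ↦ D(p₁W‖p₂W)` at the
identity has its row-wise maxima on the diagonal, and `Ψ i i = p₁ i ln (p₁ i / p₂ i)`. -/
theorem stmt14 {M : ℕ} (p₁ p₂ : Fin M → ℝ)
    (h₁ : ∀ i, 0 < p₁ i) (h₂ : ∀ i, 0 < p₂ i)
    (hs₁ : ∑ i, p₁ i = 1) (hs₂ : ∑ i, p₂ i = 1)
    (Ψ : Fin M → Fin M → ℝ)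
    (hΨ : ∀ i j, Ψ i j = p₁ i * (Real.log (p₁ j / p₂ j) + 1) - p₂ i * (p₁ j / p₂ j)) :
    (∀ i j, Ψ i j ≤ Ψ i i) ∧ (∀ i, Ψ i i = p₁ i * Real.log (p₁ i / p₂ i)) :=
  stmt14_general p₁ p₂ h₁ h₂ Ψ hΨ
end

section
/- Let M ≥ 2 and let l satisfy log₂(M−1) ≤ l ≤ log₂ M. Let σ be any function from {1,…,M} to {1,…,M} with σ(i) ≠ i for all i, and define the M×M matrix W by W_{ii} = 2^l/M for all i, W_{i,σ(i)} = (M−2^l)/M for all i, and W_{ij} = 0 otherwise. Then W is row-stochastic with nonnegative entries, each row of W has at most two nonzero entries, W has at least M(M−2) zero entries, all diagonal entries of W are positive, and Σ_{j=1}^{M} max_i W_{ij} = 2^l. -/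
open Finset

section DiagShift

variable {ι R : Type*} [DecidableEq ι]

def diagShift [Zero R] (σ : ι → ι) (a b : R) (i j : ι) : R :=
  if j = i then a else if j = σ i then b else 0

theorem diagShift_nonneg [Zero R] [Preorder R] (σ : ι → ι) {a b : R} (ha : 0 ≤ a)
    (hb : 0 ≤ b) (i j : ι) : 0 ≤ diagShift σ a b i j := by
  unfold diagShift
  split_ifs
  exacts [ha, hb, le_rfl]

theorem diagShift_le_diag [Zero R] [Preorder R] (σ : ι → ι) {a b : R} (ha : 0 ≤ a)
    (hba : b ≤ a) (i j : ι) : diagShift σ a b i j ≤ diagShift σ a b j j := by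
  simp only [diagShift, if_true]
  split_ifs
  exacts [le_rfl, hba, ha]

theorem support_diagShift_subset [Zero R] (σ : ι → ι) (a b : R) (i : ι) :
    {j | diagShift σ a b i j ≠ 0} ⊆ ({i, σ i} : Set ι) := by
  intro j hj
  by_contra hji
  simp only [Set.mem_insert_iff, Set.mem_singleton_iff, not_or] at hji
  exact hj (by simp [diagShift, hji.1, hji.2])

theorem card_support_diagShift_le [Fintype ι] [Zero R] [DecidableEq R] (σ : ι → ι) (a b : R)
    (i : ι) : #{j | diagShift σ a b i j ≠ 0} ≤ 2 := by
  calc #{j | diagShift σ a b i j ≠ 0}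
      ≤ #({i, σ i} : Finset ι) := card_le_card fun j hj => by
        simpa using support_diagShift_subset σ a b i (by simpa using hj)
    _ ≤ 2 := card_le_two

theorem sum_diagShift [Fintype ι] [AddCommMonoid R] (σ : ι → ι) (a b : R) {i : ι}
    (hi : σ i ≠ i) : ∑ j, diagShift σ a b i j = a + b := by
  rw [← sum_subset (subset_univ {i, σ i}) fun j _ hj => ?_, sum_pair hi.symm]
  · simp [diagShift, hi]
  · simp only [mem_insert, mem_singleton, not_or] at hj
    simp [diagShift, hj.1, hj.2]

end DiagShift

theorem le_card_filter_eq_zero {ι R : Type*} [Fintype ι] [Zero R] [DecidableEq R]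
    (W : ι → ι → R) {k : ℕ} (hk : ∀ i, #{j | W i j ≠ 0} ≤ k) :
    Fintype.card ι * (Fintype.card ι - k) ≤ #{q : ι × ι | W q.1 q.2 = 0} := by
  have hrows : #{q : ι × ι | W q.1 q.2 = 0} = ∑ i, #{j | W i j = 0} := by
    simp only [card_filter, Fintype.sum_prod_type]
  have hrow (i : ι) : Fintype.card ι - k ≤ #{j | W i j = 0} := by
    have := card_filter_add_card_filter_not (s := univ) (fun j => W i j = 0)
    have := hk i
    simp only [ne_eq, card_univ] at *
    omega
  calc Fintype.card ι * (Fintype.card ι - k) = ∑ _i : ι, (Fintype.card ι - k) := by simp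
    _ ≤ _ := hrows ▸ sum_le_sum fun i _ => hrow i

theorem colMax_eq_of_le {M : ℕ} (hM : 1 ≤ M) (W : Fin M → Fin M → ℝ) {j k : Fin M}
    (h : ∀ i, W i j ≤ W k j) : colMax hM W j = W k j :=
  le_antisymm (sup'_le _ _ fun i _ => h i) (le_sup' (fun i => W i j) (mem_univ k))

/-- High-utility regime construction: for `M ≥ 2`, `log₂(M-1) ≤ l ≤ log₂ M`, and any map
`σ` with `σ i ≠ i`, the matrix with diagonal entries `2^l / M`, entries `(M - 2^l)/M` at
positions `(i, σ i)`, and zeros elsewhere is row-stochastic with nonnegative entries, has at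
most two nonzero entries per row, at least `M(M-2)` zero entries, positive diagonal, and
sum of column maxima exactly `2^l`. -/
theorem stmt15 {M : ℕ} (hM : 2 ≤ M) (l : ℝ)
    (hl1 : Real.logb 2 ((M : ℝ) - 1) ≤ l) (hl2 : l ≤ Real.logb 2 (M : ℝ))
    (σ : Fin M → Fin M) (hσ : ∀ i, σ i ≠ i)
    (W : Fin M → Fin M → ℝ)
    (hW : ∀ i j, W i j =
      if j = i then (2 : ℝ) ^ l / M
      else if j = σ i then ((M : ℝ) - (2 : ℝ) ^ l) / M
      else 0) :
    (∀ i j, 0 ≤ W i j) ∧ (∀ i, ∑ j, W i j = 1) ∧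
    (∀ i, (Finset.univ.filter (fun j => W i j ≠ 0)).card ≤ 2) ∧
    (M * (M - 2) ≤ (Finset.univ.filter (fun q : Fin M × Fin M => W q.1 q.2 = 0)).card) ∧
    (∀ i, 0 < W i i) ∧
    ∑ j, colMax (by omega) W j = (2 : ℝ) ^ l := by
  have hM0 : (0 : ℝ) < M := by positivity
  have hM2 : (2 : ℝ) ≤ M := by exact_mod_cast hM
  have hp1 : (M : ℝ) - 1 ≤ 2 ^ l :=
    (Real.logb_le_iff_le_rpow (by norm_num) (by linarith)).mp hl1
  have hp2 : (2 : ℝ) ^ l ≤ M := (Real.le_logb_iff_rpow_le (by norm_num) hM0).mp hl2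
  obtain rfl : W = diagShift σ ((2 : ℝ) ^ l / M) ((M - (2 : ℝ) ^ l) / M) := funext₂ hW
  have ha : 0 < (2 : ℝ) ^ l / M := by positivity
  have hb : 0 ≤ ((M : ℝ) - 2 ^ l) / M := div_nonneg (by linarith) hM0.le
  have hba : ((M : ℝ) - 2 ^ l) / M ≤ 2 ^ l / M := by gcongr; linarith
  refine ⟨diagShift_nonneg σ ha.le hb, fun i => ?_, card_support_diagShift_le σ _ _,
    by simpa using le_card_filter_eq_zero _ (card_support_diagShift_le σ _ _),
    fun i => by simpa [diagShift] using ha, ?_⟩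
  · rw [sum_diagShift σ _ _ (hσ i)]
    field_simp
    ring
  · simp only [colMax_eq_of_le _ _ fun i => diagShift_le_diag σ ha.le hba i _, diagShift,
      if_true, sum_const, card_univ, Fintype.card_fin, nsmul_eq_mul]
    field_simp
end
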